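/- arXiv:2507.10362 — 4 statements merged into one kernel-verified Lean document; each statement's English description precedes it below -/
import Mathlib

section
/- The partial trace over the second tensor factor satisfies: for any 2^n × 2^n matrices A and B, 2^n(2^n+1) · Tr₂((∫ |φ⟩⟨φ|^{⊗2} dμ(φ)) (A ⊗ B)) = Tr(B)·A + B·A, where μ is the Haar measure on pure n-qubit states. -/
open Matrix Kronecker

/-- The swap operator on `ℂ^N ⊗ ℂ^N`. -/
def swapOp (N : ℕ) : Matrix (Fin N × Fin N) (Fin N × Fin N) ℂ :=
  fun p q => if p.1 = q.2 ∧ p.2 = q.1 then 1 else 0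

/-- The second moment of the Haar measure on unit vectors of `ℂ^N`:
`∫ |φ⟩⟨φ|^{⊗2} dμ(φ) = (I + SWAP)/(N(N+1))`. -/
noncomputable def haarMoment2 (N : ℕ) : Matrix (Fin N × Fin N) (Fin N × Fin N) ℂ :=
  (((N : ℂ) * ((N : ℂ) + 1))⁻¹) • (1 + swapOp N)

/-- Partial trace over the second tensor factor. -/
noncomputable def ptrace2 (N : ℕ) (M : Matrix (Fin N × Fin N) (Fin N × Fin N) ℂ) :
    Matrix (Fin N) (Fin N) ℂ :=
  fun i j => ∑ k : Fin N, M (i, k) (j, k)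

theorem stmt1 (n : ℕ) (A B : Matrix (Fin (2 ^ n)) (Fin (2 ^ n)) ℂ) :
    ((2 ^ n : ℂ) * ((2 ^ n : ℂ) + 1)) •
      ptrace2 (2 ^ n) (haarMoment2 (2 ^ n) * (A ⊗ₖ B))
    = B.trace • A + B * A := by
  have h2 : ((2:ℂ) ^ n) ≠ 0 := pow_ne_zero n two_ne_zero
  have h3 : ((2:ℂ) ^ n + 1) ≠ 0 := by
    have : ((2 ^ n + 1 : ℕ) : ℂ) ≠ 0 := Nat.cast_ne_zero.mpr (by positivity)
    push_cast at this
    exact this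
  have hc : ((2:ℂ) ^ n * ((2:ℂ) ^ n + 1)) ≠ 0 := mul_ne_zero h2 h3
  ext i j
  simp only [ptrace2, haarMoment2, swapOp, Matrix.mul_apply, Matrix.kroneckerMap_apply,
    Matrix.add_apply, Matrix.smul_apply, Matrix.one_apply, Matrix.trace, Matrix.diag,
    smul_eq_mul, Fintype.sum_prod_type, Prod.mk.injEq]
  push_cast
  rw [Finset.mul_sum]
  have key : ∀ k : Fin (2^n),
      (∑ a : Fin (2^n), ∑ b : Fin (2^n),
        ((if i = a ∧ k = b then (1:ℂ) else 0) + if i = b ∧ k = a then 1 else 0)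
          * (A a j * B b k))
      = A i j * B k k + A k j * B i k := by
    intro k
    simp only [add_mul, ite_mul, one_mul, zero_mul, Finset.sum_add_distrib, ite_and]
    simp [Finset.sum_ite_eq, Finset.sum_ite_eq']
  calc ∑ k : Fin (2^n), (2:ℂ)^n * ((2:ℂ)^n+1) *
        ∑ a : Fin (2^n), ∑ b : Fin (2^n), ((2:ℂ)^n * ((2:ℂ)^n+1))⁻¹ *
          ((if i = a ∧ k = b then (1:ℂ) else 0) + if i = b ∧ k = a then 1 else 0)
            * (A a j * B b k)
      = ∑ k : Fin (2^n), (A i j * B k k + A k j * B i k) := by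
        refine Finset.sum_congr rfl fun k _ => ?_
        simp only [mul_assoc, ← Finset.mul_sum]
        rw [← mul_assoc, mul_inv_cancel_left₀ hc]
        simpa only [mul_assoc] using key k
    _ = (∑ k, B k k) * A i j + ∑ k, B i k * A k j := by
        rw [Finset.sum_add_distrib, Finset.sum_mul]
        congr 1 <;> exact Finset.sum_congr rfl fun k _ => by ring
end

section
/- In the Bell-basis measurement circuit—apply CNOTs qubit-by-qubit from register R₁ (holding density matrix ρ) to register R₂ (holding pure state |ζ⟩), apply H^{⊗n} to R₁, and measure both registers in the standard basis—the probability of obtaining outcomes (z, x) ∈ {0,1}^n × {0,1}^n equals (1/2^n)·⟨ζ*_{x,z}| ρ |ζ*_{x,z}⟩, where |ζ_{x,z}⟩ = X^x Z^z |ζ⟩ and |ζ*_{x,z}⟩ denotes its entrywise complex conjugate. -/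
open Matrix Kronecker ComplexOrder

/-- Computational basis index for `n` qubits. -/
abbrev QVec (n : ℕ) := Fin n → Fin 2

/-- Tensor product of Pauli `X` operators: `X^x` (bit-flip by the string `x`). -/
noncomputable def pauliX {n : ℕ} (x : QVec n) : Matrix (QVec n) (QVec n) ℂ :=
  fun a b => if a = b + x then 1 else 0

/-- Tensor product of Pauli `Z` operators: `Z^z` (phase `(-1)^{z·a}`). -/
noncomputable def pauliZ {n : ℕ} (z : QVec n) : Matrix (QVec n) (QVec n) ℂ :=
  fun a b => if a = b then (-1 : ℂ) ^ (∑ i, (z i).val * (a i).val) else 0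

/-- Hadamard on every qubit: `H^{⊗n}`. -/
noncomputable def hadamardN (n : ℕ) : Matrix (QVec n) (QVec n) ℂ :=
  fun a b => (((Real.sqrt (2 ^ n) : ℝ) : ℂ))⁻¹ * (-1 : ℂ) ^ (∑ i, (a i).val * (b i).val)

/-- Qubit-by-qubit CNOT with controls in the first register and targets in the second:
`|a,b⟩ ↦ |a, b ⊕ a⟩`. -/
noncomputable def cnotN (n : ℕ) : Matrix (QVec n × QVec n) (QVec n × QVec n) ℂ :=
  fun p q => if p.1 = q.1 ∧ p.2 = q.2 + q.1 then 1 else 0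

/-- Outer product `|v⟩⟨v|`. -/
noncomputable def outer {n : ℕ} (v : QVec n → ℂ) : Matrix (QVec n) (QVec n) ℂ :=
  vecMulVec v (star v)

noncomputable def sgn {n : ℕ} (z a : QVec n) : ℂ :=
  (-1 : ℂ) ^ (∑ i, (z i).val * (a i).val)

lemma qvec_add_self {n : ℕ} (v : QVec n) : v + v = 0 := by
  funext i
  have h : ∀ u : Fin 2, u + u = 0 := by decide
  exact h (v i)

lemma qvec_add_add {n : ℕ} (a b : QVec n) : a + b + b = a := by
  rw [add_assoc, qvec_add_self, add_zero]

lemma qvec_eq_iff {n : ℕ} (a b x : QVec n) : x = b + a ↔ b = x + a := by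
  constructor
  · rintro rfl; rw [qvec_add_add]
  · rintro rfl; rw [qvec_add_add]

lemma sgn_scalar (u v w : Fin 2) :
    (-1 : ℂ) ^ (u.val * (v + w).val) = (-1 : ℂ) ^ (u.val * v.val) * (-1 : ℂ) ^ (u.val * w.val) := by
  fin_cases u <;> fin_cases v <;> fin_cases w <;> norm_num [Fin.add_def]

lemma sgn_add {n : ℕ} (z a b : QVec n) : sgn z (a + b) = sgn z a * sgn z b := by
  unfold sgn
  rw [← Finset.prod_pow_eq_pow_sum, ← Finset.prod_pow_eq_pow_sum, ← Finset.prod_pow_eq_pow_sum,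
    ← Finset.prod_mul_distrib]
  exact Finset.prod_congr rfl fun i _ => sgn_scalar (z i) (a i) (b i)

lemma sgn_zero {n : ℕ} (z : QVec n) : sgn z 0 = 1 := by
  unfold sgn; simp

lemma sgn_sq {n : ℕ} (z a : QVec n) : sgn z a * sgn z a = 1 := by
  rw [← sgn_add, qvec_add_self, sgn_zero]

lemma sgn_star {n : ℕ} (z a : QVec n) : star (sgn z a) = sgn z a := by
  unfold sgn
  rw [star_pow]
  norm_num

lemma K_apply {n : ℕ} (z x a b : QVec n) :
    ((hadamardN n ⊗ₖ (1 : Matrix (QVec n) (QVec n) ℂ)) * cnotN n) (z, x) (a, b)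
      = if b = x + a then (((Real.sqrt (2 ^ n) : ℝ) : ℂ))⁻¹ * sgn z a else 0 := by
  rw [Matrix.mul_apply, Finset.sum_eq_single ((a, b + a) : QVec n × QVec n)]
  · rw [cnotN]
    simp only [and_self, if_pos rfl, eq_self_iff_true, if_true, mul_one]
    rw [kroneckerMap_apply, hadamardN, Matrix.one_apply, mul_ite, mul_one, mul_zero,
      if_congr (qvec_eq_iff a b x) rfl rfl]
    rfl
  · intro p _ hp
    rw [cnotN, if_neg, mul_zero]
    rintro ⟨h1, h2⟩
    exact hp (Prod.ext h1 h2)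
  · simp

lemma XZ_apply {n : ℕ} (x z a b : QVec n) :
    (pauliX x * pauliZ z) a b = if b = a + x then sgn z b else 0 := by
  rw [Matrix.mul_apply, Finset.sum_eq_single b]
  · rw [pauliZ, if_pos rfl, pauliX, ite_mul, one_mul, zero_mul,
      if_congr (qvec_eq_iff x b a) rfl rfl]
    rfl
  · intro c _ hc
    rw [pauliZ, if_neg hc, mul_zero]
  · simp

lemma XZ_mulVec {n : ℕ} (x z : QVec n) (ζ : QVec n → ℂ) (a : QVec n) :
    (pauliX x * pauliZ z).mulVec ζ a = sgn z (a + x) * ζ (a + x) := by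
  rw [Matrix.mulVec, dotProduct, Finset.sum_eq_single (a + x)]
  · rw [XZ_apply, if_pos rfl]
  · intro c _ hc
    rw [XZ_apply, if_neg hc, zero_mul]
  · simp

lemma star_ite (p : Prop) [Decidable p] (a b : ℂ) :
    star (if p then a else b) = if p then star a else star b := apply_ite star p a b

lemma KM_apply {n : ℕ} (ρ : Matrix (QVec n) (QVec n) ℂ) (ζ : QVec n → ℂ) (z x q1 q2 : QVec n) :
    (((hadamardN n ⊗ₖ (1 : Matrix (QVec n) (QVec n) ℂ)) * cnotN n) * (ρ ⊗ₖ outer ζ)) (z, x) (q1, q2)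
      = ∑ p1, ((((Real.sqrt (2 ^ n) : ℝ) : ℂ))⁻¹ * sgn z p1) *
          (ρ p1 q1 * (ζ (x + p1) * star (ζ q2))) := by
  rw [Matrix.mul_apply, Fintype.sum_prod_type]
  simp only [K_apply, ite_mul, zero_mul, Finset.sum_ite_eq', Finset.mem_univ, if_true,
    kroneckerMap_apply, outer, vecMulVec_apply, Pi.star_apply]

/-- Probability of outcome `(z,x)` in the Bell-basis measurement circuit equals
`(1/2^n) ⟨ζ*_{x,z}| ρ |ζ*_{x,z}⟩` where `|ζ_{x,z}⟩ = X^x Z^z |ζ⟩`. -/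
theorem stmt2 (n : ℕ) (ρ : Matrix (QVec n) (QVec n) ℂ)
    (hρ : ρ.PosSemidef) (hρtr : ρ.trace = 1)
    (ζ : QVec n → ℂ) (hζ : star ζ ⬝ᵥ ζ = 1) (z x : QVec n) :
    (((hadamardN n ⊗ₖ (1 : Matrix (QVec n) (QVec n) ℂ)) * cnotN n) * (ρ ⊗ₖ outer ζ) *
        ((hadamardN n ⊗ₖ (1 : Matrix (QVec n) (QVec n) ℂ)) * cnotN n)ᴴ) (z, x) (z, x)
    = (1 / 2 ^ n : ℂ) *
        (star (star ((pauliX x * pauliZ z).mulVec ζ)) ⬝ᵥ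
          ρ.mulVec (star ((pauliX x * pauliZ z).mulVec ζ))) := by
  have hcstar : star ((((Real.sqrt (2 ^ n) : ℝ) : ℂ))⁻¹) = (((Real.sqrt (2 ^ n) : ℝ) : ℂ))⁻¹ := by
    rw [star_inv₀]
    norm_num [Complex.star_def, Complex.conj_ofReal]
  have hc : (((Real.sqrt (2 ^ n) : ℝ) : ℂ))⁻¹ * (((Real.sqrt (2 ^ n) : ℝ) : ℂ))⁻¹
      = 1 / 2 ^ n := by
    have h2 : Real.sqrt (2 ^ n) * Real.sqrt (2 ^ n) = 2 ^ n :=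
      Real.mul_self_sqrt (by positivity)
    rw [← mul_inv, ← Complex.ofReal_mul, h2]
    push_cast
    ring
  rw [Matrix.mul_apply, Fintype.sum_prod_type]
  simp only [Matrix.conjTranspose_apply, KM_apply, K_apply, star_ite, star_zero, star_mul',
    hcstar, sgn_star, mul_ite, ite_mul, mul_zero, zero_mul, Finset.sum_ite_eq',
    Finset.mem_univ, if_true, Finset.sum_mul]
  have hw : (pauliX x * pauliZ z).mulVec ζ = fun a => sgn z (a + x) * ζ (a + x) :=
    funext fun a => XZ_mulVec x z ζ a
  rw [star_star, hw]
  simp only [dotProduct, Matrix.mulVec, Pi.star_apply, star_mul', sgn_star, Finset.mul_sum]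
  rw [Finset.sum_comm]
  refine Finset.sum_congr rfl fun a _ => Finset.sum_congr rfl fun b _ => ?_
  rw [show x + a = a + x from add_comm x a, show x + b = b + x from add_comm x b,
    sgn_add z a x, sgn_add z b x]
  have hsq := sgn_sq z x
  linear_combination (sgn z a * sgn z b * ρ a b * ζ (a + x) * star (ζ (b + x))) * hc -
    (1 / 2 ^ n : ℂ) * (sgn z a * sgn z b * ρ a b * ζ (a + x) * star (ζ (b + x))) * hsq
end

section
/- Tightness of the additive-to-relative conversion: for n ≥ 2, t ≥ 1, and 0 < ε < 1, the mixture M = (1 − ε/2)·H_t + (ε/2)·|ψ⟩⟨ψ|^{⊗t} (for any fixed unit vector ψ ∈ ℂ^{2^n}) satisfies ‖M − H_t‖₁ ≤ ε, yet M is NOT a relative ε'-approximate state t-design for any ε' < dim(Sym_{N,t})·ε/3; explicitly, Tr(Π_ψ M) > (1+ε')·Tr(Π_ψ H_t) where Π_ψ = |ψ⟩⟨ψ|^{⊗t}. -/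
open Matrix ComplexOrder

/-- The operator on `(ℂ^N)^{⊗t}` permuting the tensor factors according to `π`. -/
noncomputable def permOp (N t : ℕ) (π : Equiv.Perm (Fin t)) :
    Matrix (Fin t → Fin N) (Fin t → Fin N) ℂ :=
  fun a b => if a = b ∘ π then 1 else 0

/-- The orthogonal projector onto the symmetric subspace `Sym_{N,t} ⊆ (ℂ^N)^{⊗t}`. -/
noncomputable def symProj (N t : ℕ) : Matrix (Fin t → Fin N) (Fin t → Fin N) ℂ :=
  ((Nat.factorial t : ℂ))⁻¹ • ∑ π : Equiv.Perm (Fin t), permOp N t π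

/-- The dimension of the symmetric subspace `Sym_{N,t}`. -/
def dimSym (N t : ℕ) : ℕ := Nat.choose (N + t - 1) t

/-- The `t`-th moment of the Haar measure on unit vectors of `ℂ^N`:
`H_t = Π_{sym}/dim(Sym_{N,t})`. -/
noncomputable def haarMomentT (N t : ℕ) : Matrix (Fin t → Fin N) (Fin t → Fin N) ℂ :=
  ((dimSym N t : ℂ))⁻¹ • symProj N t

/-- The `t`-fold tensor power `v^{⊗t}` of a vector `v : ℂ^N`. -/
noncomputable def tpow {N t : ℕ} (v : Fin N → ℂ) : (Fin t → Fin N) → ℂ :=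
  fun f => ∏ j, v (f j)

/-- The trace norm (Schatten 1-norm) `‖A‖₁ = Tr √(AᴴA)`. -/
noncomputable def traceNorm {m : Type*} [Fintype m] [DecidableEq m] (A : Matrix m m ℂ) : ℝ :=
  ((Matrix.posSemidef_conjTranspose_mul_self A).1.eigenvectorUnitary.1 *
    diagonal (fun i => ((Real.sqrt ((Matrix.posSemidef_conjTranspose_mul_self A).1.eigenvalues i) : ℝ) : ℂ)) *
    (star (Matrix.posSemidef_conjTranspose_mul_self A).1.eigenvectorUnitary : Matrix m m ℂ)).trace.re

/-!
`H_t = Q/d`, where `Q` is the projector onto the symmetric subspace. `Q` is the average of the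
permutation operators, so Burnside's lemma identifies its trace with the number of orbits of
`Sym_t` on `[N]^t`, i.e. with the number of size-`t` multisets: `tr Q = d = dim Sym_{N,t}`.
The vector `ψ^{⊗t}` is symmetric, so `P = |ψ⟩⟨ψ|^{⊗t}` is a subprojection of `Q`, and
`M - H_t = (ε/2)(P - Q/d) = (ε/2)((1 - 1/d) P - (1/d)(Q - P))` is a combination of two orthogonal
projectors, whose trace norm is `ε (1 - 1/d) ≤ ε`. On the other hand `tr(P H_t) = 1/d` while
`tr(P M) = (1 - ε/2)/d + ε/2`, and this exceeds `(1 + ε')/d` as soon as `ε' < ε (d - 1)/2`,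
which follows from `ε' < d ε/3` because `d ≥ 3` once `N ≥ 4` and `t ≥ 1`.
-/

lemma isStarProjection_vecMulVec_self_star {m α : Type*} [Fintype m] [Semiring α] [StarRing α]
    {u : m → α} (hu : star u ⬝ᵥ u = 1) : IsStarProjection (vecMulVec u (star u)) where
  isIdempotentElem := by rw [IsIdempotentElem, vecMulVec_mul_vecMulVec, hu, one_smul]
  isSelfAdjoint := by rw [IsSelfAdjoint, star_eq_conjTranspose, conjTranspose_vecMulVec, star_star]

section TraceNorm

open scoped MatrixOrder

variable {m : Type*} [Fintype m] [DecidableEq m]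

lemma traceNorm_eq_re_trace_sqrt (A : Matrix m m ℂ) :
    traceNorm A = (CFC.sqrt (Aᴴ * A)).trace.re := by
  have hA := posSemidef_conjTranspose_mul_self A
  rw [traceNorm, CFC.sqrt_eq_cfc, cfc_nnreal_eq_real _ _ hA.nonneg, hA.1.cfc_eq]
  simp [IsHermitian.cfc, Function.comp_def, hA.eigenvalues_nonneg]

lemma traceNorm_eq_re_trace_of_mul_self_eq {A S : Matrix m m ℂ} (hS : 0 ≤ S)
    (h : S * S = Aᴴ * A) : traceNorm A = S.trace.re := by
  rw [traceNorm_eq_re_trace_sqrt, CFC.sqrt_unique h hS]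

/-- Since `P ⟂ R`, the absolute value of `a • P - b • R` is `a • P + b • R`. -/
lemma traceNorm_smul_sub_smul {P R : Matrix m m ℂ} (hP : IsStarProjection P)
    (hR : IsStarProjection R) (hPR : P * R = 0) {a b : ℝ} (ha : 0 ≤ a) (hb : 0 ≤ b) :
    traceNorm (a • P - b • R) = a * P.trace.re + b * R.trace.re := by
  have hRP : R * P = 0 := by
    simpa [hP.isSelfAdjoint.star_eq, hR.isSelfAdjoint.star_eq] using congr(star $hPR)
  have hPP := hP.isIdempotentElem.eq
  have hRR := hR.isIdempotentElem.eq
  have hS : 0 ≤ a • P + b • R :=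
    add_nonneg (smul_nonneg ha hP.nonneg) (smul_nonneg hb hR.nonneg)
  have hsq : (a • P + b • R) * (a • P + b • R) = (a • P - b • R)ᴴ * (a • P - b • R) := by
    have hPh : Pᴴ = P := hP.isSelfAdjoint
    have hRh : Rᴴ = R := hR.isSelfAdjoint
    rw [conjTranspose_sub, conjTranspose_smul, conjTranspose_smul, star_trivial, star_trivial,
      hPh, hRh]
    simp only [add_mul, mul_add, sub_mul, mul_sub, smul_mul_smul_comm, hPP, hRR, hPR, hRP,
      smul_zero]
    module
  rw [traceNorm_eq_re_trace_of_mul_self_eq hS hsq, trace_add, trace_smul, trace_smul]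
  simp

lemma traceNorm_smul_sub_smul_of_mul_eq_left {P Q : Matrix m m ℂ} (hP : IsStarProjection P)
    (hQ : IsStarProjection Q) (hPQ : P * Q = P) {a b : ℝ} (hb : 0 ≤ b) (hba : b ≤ a) :
    traceNorm (a • P - b • Q) = (a - b) * P.trace.re + b * (Q - P).trace.re := by
  have hperp : P * (Q - P) = 0 := by rw [mul_sub, hPQ, hP.isIdempotentElem.eq, sub_self]
  rw [show a • P - b • Q = (a - b) • P - b • (Q - P) by module,
    traceNorm_smul_sub_smul hP (hP.sub_of_mul_eq_left hQ hPQ) hperp (sub_nonneg.mpr hba) hb]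

lemma traceNorm_smul_sub_smul_inv {P Q : Matrix m m ℂ} (hP : IsStarProjection P)
    (hQ : IsStarProjection Q) (hPQ : P * Q = P) (htrP : P.trace = 1) {d : ℝ}
    (htrQ : Q.trace = d) (hd : 1 ≤ d) {c : ℝ} (hc : 0 ≤ c) :
    traceNorm (c • P - (c * d⁻¹) • Q) = 2 * c * (1 - d⁻¹) := by
  rw [traceNorm_smul_sub_smul_of_mul_eq_left hP hQ hPQ (by positivity)
    (mul_le_of_le_one_right hc (inv_le_one_of_one_le₀ hd)), trace_sub, htrP, htrQ]
  simp only [Complex.one_re, Complex.sub_re, Complex.ofReal_re]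
  field_simp
  ring

end TraceNorm

open Equiv

section PermAverage

variable (G n : Type*) [Group G] [Fintype G] [MulAction G n] [Fintype n] [DecidableEq n]

noncomputable def permAverage : Matrix n n ℂ :=
  (Fintype.card G : ℂ)⁻¹ • ∑ g : G, (MulAction.toPermHom G n g).permMatrix ℂ

variable {G n}

lemma sum_permMatrix_toPermHom_mul_self :
    (∑ g : G, (MulAction.toPermHom G n g).permMatrix ℂ) *
        ∑ g : G, (MulAction.toPermHom G n g).permMatrix ℂ =
      (Fintype.card G : ℂ) • ∑ g : G, (MulAction.toPermHom G n g).permMatrix ℂ := by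
  have hrow : ∀ g : G, (MulAction.toPermHom G n g).permMatrix ℂ *
      ∑ h : G, (MulAction.toPermHom G n h).permMatrix ℂ =
        ∑ h : G, (MulAction.toPermHom G n h).permMatrix ℂ := by
    intro g
    rw [Finset.mul_sum]
    simp_rw [← permMatrix_mul, ← map_mul]
    exact Fintype.sum_equiv (Equiv.mulRight g) _ _ fun _ => rfl
  rw [Finset.sum_mul, Finset.sum_congr rfl fun g _ => hrow g, Finset.sum_const,
    Finset.card_univ, Nat.cast_smul_eq_nsmul]

lemma isStarProjection_permAverage : IsStarProjection (permAverage G n) where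
  isIdempotentElem := by
    have hG : (Fintype.card G : ℂ) ≠ 0 := Nat.cast_ne_zero.mpr Fintype.card_ne_zero
    rw [IsIdempotentElem, permAverage, smul_mul_smul, sum_permMatrix_toPermHom_mul_self,
      smul_smul, mul_assoc, inv_mul_cancel₀ hG, mul_one]
  isSelfAdjoint := by
    rw [IsSelfAdjoint, permAverage, star_smul, star_inv₀, star_natCast, star_sum]
    congr 1
    refine Fintype.sum_equiv (Equiv.inv G) _ _ fun g => ?_
    rw [star_eq_conjTranspose, conjTranspose_permMatrix, ← map_inv]
    rfl

lemma permAverage_mulVec_of_invariant {v : n → ℂ} (hv : ∀ (g : G) (x : n), v (g • x) = v x) :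
    permAverage G n *ᵥ v = v := by
  have hG : (Fintype.card G : ℂ) ≠ 0 := Nat.cast_ne_zero.mpr Fintype.card_ne_zero
  have hterm : ∀ g : G, (MulAction.toPermHom G n g).permMatrix ℂ *ᵥ v = v := fun g => by
    rw [permMatrix_mulVec]
    exact funext (hv g)
  rw [permAverage, smul_mulVec, sum_mulVec, Finset.sum_congr rfl fun g _ => hterm g,
    Finset.sum_const, Finset.card_univ, ← Nat.cast_smul_eq_nsmul ℂ, smul_smul,
    inv_mul_cancel₀ hG, one_smul]

/-- Burnside's lemma, read as a trace identity. -/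
lemma trace_permAverage :
    (permAverage G n).trace = Nat.card (MulAction.orbitRel.Quotient G n) := by
  classical
  have hG : (Fintype.card G : ℂ) ≠ 0 := Nat.cast_ne_zero.mpr Fintype.card_ne_zero
  have hfix : ∀ g : G, ((MulAction.toPermHom G n g).permMatrix ℂ).trace =
      Fintype.card (MulAction.fixedBy n g) := fun g => by
    rw [trace_permutation, ← Nat.card_coe_set_eq, Nat.card_eq_fintype_card]
    rfl
  have hburnside := MulAction.sum_card_fixedBy_eq_card_orbits_mul_card_group G n
  rw [permAverage, trace_smul, trace_sum, Finset.sum_congr rfl fun g _ => hfix g,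
    ← Nat.cast_sum, hburnside, Nat.card_eq_fintype_card, Nat.cast_mul, smul_eq_mul,
    mul_comm, mul_inv_cancel_right₀ hG]

end PermAverage

section SymmetricSubspace

attribute [local instance] arrowAction

lemma perm_smul_eq_comp {α : Type*} {t : ℕ} (π : Perm (Fin t)) (a : Fin t → α) :
    π • a = a ∘ ⇑π⁻¹ := rfl

lemma List.ofFn_perm_ofFn_iff {α : Type*} [LinearOrder α] {t : ℕ} {a b : Fin t → α} :
    (List.ofFn a).Perm (List.ofFn b) ↔ ∃ σ : Equiv.Perm (Fin t), a = b ∘ ⇑σ := by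
  refine ⟨fun h => ?_, fun ⟨σ, hσ⟩ => hσ ▸ σ.ofFn_comp_perm b⟩
  -- both sides sort to the same monotone tuple
  have hsorted : a ∘ ⇑(Tuple.sort a) = b ∘ ⇑(Tuple.sort b) :=
    List.ofFn_injective <| List.Perm.eq_of_sortedLE
      (Tuple.monotone_sort a).sortedLE_ofFn (Tuple.monotone_sort b).sortedLE_ofFn
      (((Tuple.sort a).ofFn_comp_perm a).trans h |>.trans ((Tuple.sort b).ofFn_comp_perm b).symm)
  refine ⟨(Tuple.sort a).symm.trans (Tuple.sort b), funext fun x => ?_⟩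
  simpa using congrFun hsorted ((Tuple.sort a).symm x)

noncomputable def orbitQuotientEquivSym (α : Type*) [LinearOrder α] (t : ℕ) :
    MulAction.orbitRel.Quotient (Perm (Fin t)) (Fin t → α) ≃ Sym α t := by
  refine Equiv.ofBijective
    (Quotient.lift (fun a : Fin t → α => (⟨List.ofFn a, by simp⟩ : Sym α t)) ?_) ⟨?_, ?_⟩
  · rintro a b ⟨π, rfl⟩
    exact Subtype.ext <| Multiset.coe_eq_coe.mpr (π⁻¹.ofFn_comp_perm b)
  · rintro ⟨a⟩ ⟨b⟩ hab
    obtain ⟨σ, rfl⟩ := List.ofFn_perm_ofFn_iff.mp (Multiset.coe_eq_coe.mp congr($hab.1))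
    exact Quotient.sound ⟨σ⁻¹, by simp [perm_smul_eq_comp]⟩
  · rintro ⟨⟨l⟩, hl⟩
    obtain rfl : l.length = t := by simpa using hl
    exact ⟨Quotient.mk _ l.get, Subtype.ext <| congrArg Multiset.ofList (List.ofFn_get l)⟩

variable {N t : ℕ}

lemma permOp_eq_permMatrix (π : Perm (Fin t)) :
    permOp N t π = (MulAction.toPermHom (Perm (Fin t)) (Fin t → Fin N) π).permMatrix ℂ := by
  ext a b
  simp only [permOp, PEquiv.toMatrix_apply, toPEquiv_apply, Option.mem_def, Option.some.injEq,
    MulAction.toPermHom_apply, MulAction.toPerm_apply, perm_smul_eq_comp, Perm.inv_def,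
    Equiv.comp_symm_eq]

lemma symProj_eq_permAverage :
    symProj N t = permAverage (Perm (Fin t)) (Fin t → Fin N) := by
  simp_rw [symProj, permAverage, permOp_eq_permMatrix, Fintype.card_perm, Fintype.card_fin]

lemma isStarProjection_symProj : IsStarProjection (symProj N t) :=
  symProj_eq_permAverage ▸ isStarProjection_permAverage

lemma tpow_perm_smul (v : Fin N → ℂ) (π : Perm (Fin t)) (a : Fin t → Fin N) :
    tpow v (π • a) = tpow v a :=
  Equiv.prod_comp π⁻¹ fun j => v (a j)

lemma symProj_mulVec_tpow (v : Fin N → ℂ) : symProj N t *ᵥ tpow v = tpow v := by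
  rw [symProj_eq_permAverage]
  exact permAverage_mulVec_of_invariant (tpow_perm_smul v)

lemma trace_symProj : (symProj N t).trace = dimSym N t := by
  rw [symProj_eq_permAverage, trace_permAverage, Nat.card_congr (orbitQuotientEquivSym _ _),
    Nat.card_eq_fintype_card, Sym.card_sym_eq_choose, Fintype.card_fin, dimSym]

end SymmetricSubspace

lemma dotProduct_tpow {N : ℕ} (t : ℕ) (v w : Fin N → ℂ) :
    star (tpow (t := t) v) ⬝ᵥ tpow w = (star v ⬝ᵥ w) ^ t := by
  simp only [dotProduct, tpow, Pi.star_apply, star_prod, ← Finset.prod_mul_distrib]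
  rw [← Fintype.piFinset_univ,
    ← Finset.prod_univ_sum (fun _ => Finset.univ) fun _ i => star (v i) * w i,
    Finset.prod_const, Finset.card_univ, Fintype.card_fin]

lemma one_add_mul_inv_lt {d ε ε' : ℝ} (hd : 3 ≤ d) (hε : 0 < ε) (hε' : ε' < d * ε / 3) :
    (1 + ε') * d⁻¹ < (1 - ε / 2) * d⁻¹ + ε / 2 := by
  have hε'_lt : ε' < ε * (d - 1) / 2 := by nlinarith
  calc (1 + ε') * d⁻¹ < (1 + ε * (d - 1) / 2) * d⁻¹ := by gcongr
    _ = (1 - ε / 2) * d⁻¹ + ε / 2 := by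
      field_simp
      ring

lemma le_dimSym {N t : ℕ} (ht : 1 ≤ t) : N ≤ dimSym N t := by
  obtain _ | k := N
  · exact Nat.zero_le _
  rw [dimSym, show k + 1 + t - 1 = k + t by omega, ← Nat.choose_symm_add]
  calc k + 1 = (k + 1).choose k := (Nat.choose_succ_self_right k).symm
    _ ≤ (k + t).choose k := Nat.choose_le_choose k (by omega)

theorem stmt12_general (n t : ℕ) (hn : 2 ≤ n) (ht : 1 ≤ t) (ε : ℝ) (hε0 : 0 < ε)
    (ψ : Fin (2 ^ n) → ℂ) (hψ : star ψ ⬝ᵥ ψ = 1)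
    (M : Matrix (Fin t → Fin (2 ^ n)) (Fin t → Fin (2 ^ n)) ℂ)
    (hM : M = (1 - ε / 2) • haarMomentT (2 ^ n) t +
      (ε / 2) • vecMulVec (tpow ψ) (star (tpow ψ))) :
    traceNorm (M - haarMomentT (2 ^ n) t) ≤ ε ∧
      ∀ ε' : ℝ, ε' < (dimSym (2 ^ n) t : ℝ) * ε / 3 →
        (1 + ε') * ((vecMulVec (tpow ψ) (star (tpow (t := t) ψ)) *
            haarMomentT (2 ^ n) t).trace).re <
          ((vecMulVec (tpow ψ) (star (tpow ψ)) * M).trace).re := by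
  have hd : 3 ≤ (dimSym (2 ^ n) t : ℝ) := by
    have h4 : 4 ≤ 2 ^ n := by simpa using Nat.pow_le_pow_right two_pos hn
    exact_mod_cast (show 3 ≤ 2 ^ n by omega).trans (le_dimSym ht)
  set P := vecMulVec (tpow (t := t) ψ) (star (tpow ψ))
  set Q := symProj (2 ^ n) t
  set d : ℝ := (dimSym (2 ^ n) t : ℝ)
  have hunit : star (tpow (t := t) ψ) ⬝ᵥ tpow ψ = 1 := by rw [dotProduct_tpow, hψ, one_pow]
  have hP : IsStarProjection P := isStarProjection_vecMulVec_self_star hunit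
  have hQ : IsStarProjection Q := isStarProjection_symProj
  have hQP : Q * P = P := by rw [mul_vecMulVec, symProj_mulVec_tpow]
  have hPQ : P * Q = P := by
    simpa [hP.isSelfAdjoint.star_eq, hQ.isSelfAdjoint.star_eq] using congr(star $hQP)
  have htrP : P.trace = 1 := by rw [trace_vecMulVec, dotProduct_comm, hunit]
  have htrQ : Q.trace = d := by rw [trace_symProj]; rfl
  have hH : haarMomentT (2 ^ n) t = d⁻¹ • Q := by
    rw [haarMomentT, ← Complex.coe_smul]
    push_cast
    rfl
  constructor
  · have hdiff : M - haarMomentT (2 ^ n) t = (ε / 2) • P - (ε / 2 * d⁻¹) • Q := by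
      rw [hM, hH]
      module
    rw [hdiff, traceNorm_smul_sub_smul_inv hP hQ hPQ htrP htrQ (by linarith) (by positivity)]
    nlinarith [inv_pos.mpr (show 0 < d by linarith)]
  · intro ε' hε'
    have hPH : (P * haarMomentT (2 ^ n) t).trace = (d⁻¹ : ℝ) := by
      rw [hH, mul_smul_comm, trace_smul, hPQ, htrP]
      simp
    have hPM : (P * M).trace = ((1 - ε / 2) * d⁻¹ + ε / 2 : ℝ) := by
      rw [hM, mul_add, mul_smul_comm, mul_smul_comm, trace_add, trace_smul, trace_smul, hPH,
        hP.isIdempotentElem.eq, htrP]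
      simp
    rw [hPH, hPM, Complex.ofReal_re, Complex.ofReal_re]
    exact one_add_mul_inv_lt hd hε0 hε'

/-- Tightness of the additive-to-relative conversion: the mixture
`M = (1−ε/2)·H_t + (ε/2)·|ψ⟩⟨ψ|^{⊗t}` is an additive `ε`-approximate state `t`-design, but
`Tr(Π_ψ M) > (1+ε')·Tr(Π_ψ H_t)` for every `ε' < dim(Sym_{N,t})·ε/3`, so it is not a relative
`ε'`-approximate design for any such `ε'`. -/
theorem stmt12 (n t : ℕ) (hn : 2 ≤ n) (ht : 1 ≤ t) (ε : ℝ) (hε0 : 0 < ε) (hε1 : ε < 1)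
    (ψ : Fin (2 ^ n) → ℂ) (hψ : star ψ ⬝ᵥ ψ = 1)
    (M : Matrix (Fin t → Fin (2 ^ n)) (Fin t → Fin (2 ^ n)) ℂ)
    (hM : M = (1 - ε / 2) • haarMomentT (2 ^ n) t +
      (ε / 2) • vecMulVec (tpow ψ) (star (tpow ψ))) :
    traceNorm (M - haarMomentT (2 ^ n) t) ≤ ε ∧
      ∀ ε' : ℝ, ε' < (dimSym (2 ^ n) t : ℝ) * ε / 3 →
        (1 + ε') * ((vecMulVec (tpow ψ) (star (tpow (t := t) ψ)) *
            haarMomentT (2 ^ n) t).trace).re <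
          ((vecMulVec (tpow ψ) (star (tpow ψ)) * M).trace).re :=
  stmt12_general n t hn ht ε hε0 ψ hψ M hM
end

section
/- Median-of-means concentration: let X be a real random variable with mean μ and variance σ². For γ > 0, taking K independent sample means, each over L = ⌈34σ²/γ²⌉ i.i.d. copies of X, the median μ̂(L,K) of these K means satisfies Pr[|μ̂(L,K) − μ| ≥ γ] ≤ 2e^{−K/2}. -/
/-!
Each group mean has mean `μm` and variance `σ² / L ≤ γ² / 34`, so by Chebyshev it is `γ`-far from
`μm` with probability at most `1/34`; the group means are independent because they depend on
disjoint blocks of the samples. If the median is `γ`-far from `μm` (say above it), then so are all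
the means sorted above it, i.e. at least `m = K - ⌊K/2⌋ ≥ K/2` of them. A union bound over the
`m`-subsets bounds this by `C(K, m) 34⁻ᵐ ≤ 4ᵐ 34⁻ᵐ = (2/17)ᵐ ≤ e⁻ᵐ ≤ e^{-K/2}`, using `2/17 < 1/e`.
-/

open MeasureTheory ProbabilityTheory Finset

namespace ProbabilityTheory

variable {Ω : Type*} [MeasurableSpace Ω] {P : Measure Ω}

lemma iIndepFun.curry {ι κ β : Type*} [MeasurableSpace β] {X : ι × κ → Ω → β}
    (hX : ∀ p, Measurable (X p)) (h : iIndepFun X P) :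
    iIndepFun (fun i ω j ↦ X (i, j) ω) P := by
  have := h.isProbabilityMeasure
  have : ∀ p, IsProbabilityMeasure (P.map (X p)) :=
    fun p ↦ Measure.isProbabilityMeasure_map (hX p).aemeasurable
  have hrow (i : ι) :
      P.map (fun ω j ↦ X (i, j) ω) = Measure.infinitePi fun j ↦ P.map (X (i, j)) :=
    (h.precomp (Prod.mk_right_injective i)).map_fun_eq_infinitePi_map fun j ↦ hX (i, j)
  rw [iIndepFun_iff_map_fun_eq_infinitePi_map fun i ↦ measurable_pi_lambda _ fun j ↦ hX (i, j)]
  calc P.map (fun ω i j ↦ X (i, j) ω)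
      = (P.map fun ω p ↦ X p ω).map (MeasurableEquiv.curry ι κ β) := by
        rw [Measure.map_map (MeasurableEquiv.measurable _) (measurable_pi_lambda _ hX)]; rfl
    _ = Measure.infinitePi fun i ↦ Measure.infinitePi fun j ↦ P.map (X (i, j)) := by
        rw [h.map_fun_eq_infinitePi_map hX,
          Measure.infinitePi_map_curry fun i j ↦ P.map (X (i, j))]
    _ = Measure.infinitePi fun i ↦ P.map (fun ω j ↦ X (i, j) ω) := by simp_rw [hrow]

lemma measure_abs_sum_div_card_sub_ge_le [IsProbabilityMeasure P] {ι : Type*} [Fintype ι]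
    [Nonempty ι] {X : ι → Ω → ℝ} (hX : ∀ i, MemLp (X i) 2 P)
    (hindep : Pairwise fun i j ↦ X i ⟂ᵢ[P] X j) {m v : ℝ} (hmean : ∀ i, P[X i] = m)
    (hvar : ∀ i, Var[X i; P] = v) {γ : ℝ} (hγ : 0 < γ) :
    P {ω | γ ≤ |(∑ i, X i ω) / Fintype.card ι - m|}
      ≤ ENNReal.ofReal (v / (Fintype.card ι * γ ^ 2)) := by
  set n : ℝ := (Fintype.card ι : ℝ)
  have hn : 0 < n := by positivity
  have hS : MemLp (∑ i, X i) 2 P := memLp_finsetSum' _ fun i _ ↦ hX i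
  have hSmean : P[∑ i, X i] = n * m := by
    simp [integral_finsetSum _ fun i _ ↦ (hX i).integrable one_le_two, hmean, n]
  have hSvar : Var[∑ i, X i; P] = n * v := by
    rw [IndepFun.variance_sum (fun i _ ↦ hX i) fun i _ j _ hij ↦ hindep hij]
    simp [hvar, n]
  have hevent : {ω | γ ≤ |(∑ i, X i ω) / n - m|}
      = {ω | n * γ ≤ |(∑ i, X i) ω - P[∑ i, X i]|} := by
    ext ω
    have : (∑ i, X i ω) / n - m = ((∑ i, X i) ω - n * m) / n := by
      simp only [Finset.sum_apply]; field_simp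
    simp only [Set.mem_ofPred_eq, this, hSmean, abs_div, abs_of_pos hn, le_div_iff₀ hn, mul_comm]
  calc P {ω | γ ≤ |(∑ i, X i ω) / n - m|}
      ≤ ENNReal.ofReal (Var[∑ i, X i; P] / (n * γ) ^ 2) :=
        hevent ▸ meas_ge_le_variance_div_sq hS (by positivity)
    _ = ENNReal.ofReal (v / (n * γ ^ 2)) := by
        rw [hSvar]; congr 1; field_simp

lemma measure_le_card_filter_mem_le {ι β : Type*} [Fintype ι] [MeasurableSpace β]
    {Y : ι → Ω → β} (hY : iIndepFun Y P) {s : Set β} [DecidablePred (· ∈ s)]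
    (hs : MeasurableSet s) {p : ENNReal} (hp : ∀ i, P (Y i ⁻¹' s) ≤ p) (m : ℕ) :
    P {ω | m ≤ #{i | Y i ω ∈ s}} ≤ (Fintype.card ι).choose m * p ^ m := by
  have hcover : {ω | m ≤ #{i | Y i ω ∈ s}} ⊆ ⋃ T ∈ univ.powersetCard m, ⋂ i ∈ T, Y i ⁻¹' s := by
    intro ω hω
    obtain ⟨T, hTsub, hTcard⟩ := exists_subset_card_eq hω
    refine Set.mem_biUnion (mem_powersetCard_univ.2 hTcard) (Set.mem_iInter₂.2 fun i hi ↦ ?_)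
    exact (mem_filter.1 (hTsub hi)).2
  calc P {ω | m ≤ #{i | Y i ω ∈ s}}
      ≤ ∑ T ∈ univ.powersetCard m, P (⋂ i ∈ T, Y i ⁻¹' s) :=
        (measure_mono hcover).trans (measure_biUnion_finset_le _ _)
    _ ≤ ∑ T ∈ univ.powersetCard m, p ^ m := by
        refine sum_le_sum fun T hT ↦ ?_
        rw [hY.meas_biInter fun i _ ↦ ⟨s, hs, rfl⟩, ← (mem_powersetCard_univ.1 hT)]
        exact prod_le_pow_card _ _ _ fun i _ ↦ hp i
    _ = (Fintype.card ι).choose m * p ^ m := by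
        rw [sum_const, card_powersetCard, card_univ, nsmul_eq_mul]

end ProbabilityTheory

namespace Tuple

variable {n : ℕ} {α : Type*} [LinearOrder α]

lemma sub_le_card_filter_sort_le (f : Fin n → α) (i : Fin n) :
    n - i ≤ #{k | f (sort f i) ≤ f k} := by
  rw [← Fin.card_Ici, ← card_map (sort f).toEmbedding]
  refine card_le_card fun k hk ↦ ?_
  obtain ⟨j, hj, rfl⟩ := mem_map.1 hk
  exact mem_filter.2 ⟨mem_univ _, monotone_sort f (mem_Ici.1 hj)⟩

lemma succ_le_card_filter_le_sort (f : Fin n → α) (i : Fin n) :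
    i + 1 ≤ #{k | f k ≤ f (sort f i)} := by
  rw [← Fin.card_Iic, ← card_map (sort f).toEmbedding]
  refine card_le_card fun k hk ↦ ?_
  obtain ⟨j, hj, rfl⟩ := mem_map.1 hk
  exact mem_filter.2 ⟨mem_univ _, monotone_sort f (mem_Iic.1 hj)⟩

lemma min_le_card_filter_abs_sub_ge (f : Fin n → ℝ) (i : Fin n) {μ γ : ℝ}
    (h : γ ≤ |f (sort f i) - μ|) : min (n - i) (i + 1) ≤ #{k | γ ≤ |f k - μ|} := by
  rcases le_abs'.1 h with hlow | hup
  · refine (min_le_right _ _).trans <| (succ_le_card_filter_le_sort f i).trans <|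
      card_le_card <| monotone_filter_right _ fun k _ hk ↦ ?_
    exact (by linarith : γ ≤ -(f k - μ)).trans (neg_le_abs _)
  · refine (min_le_left _ _).trans <| (sub_le_card_filter_sort_le f i).trans <|
      card_le_card <| monotone_filter_right _ fun k _ hk ↦ ?_
    exact (by linarith : γ ≤ f k - μ).trans (le_abs_self _)

end Tuple

lemma Nat.choose_mul_pow_le_exp_neg_half {K m : ℕ} (h : K ≤ 2 * m) :
    (K.choose m : ℝ) * (1 / 34) ^ m ≤ Real.exp (-K / 2) := by
  have hexp : (2 / 17 : ℝ) ≤ Real.exp (-1) := by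
    rw [Real.exp_neg, le_inv_comm₀ (by norm_num) (Real.exp_pos 1)]
    exact Real.exp_one_lt_d9.le.trans (by norm_num)
  calc (K.choose m : ℝ) * (1 / 34) ^ m
      ≤ 2 ^ (2 * m) * (1 / 34) ^ m := by
        gcongr
        exact_mod_cast (Nat.choose_le_two_pow K m).trans (Nat.pow_le_pow_right two_pos h)
    _ = (2 / 17) ^ m := by rw [pow_mul, ← mul_pow]; norm_num
    _ ≤ Real.exp (-1) ^ m := by gcongr
    _ = Real.exp (-m) := by rw [← Real.exp_nat_mul]; ring_nf
    _ ≤ Real.exp (-K / 2) := by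
        gcongr
        have : (K : ℝ) ≤ 2 * m := by exact_mod_cast h
        linarith

lemma div_ceil_mul_sq_le {σ γ : ℝ} (hγ : 0 < γ) (hL : 0 < ⌈34 * σ ^ 2 / γ ^ 2⌉₊) :
    σ ^ 2 / (⌈34 * σ ^ 2 / γ ^ 2⌉₊ * γ ^ 2) ≤ 1 / 34 := by
  have hL' : (0 : ℝ) < ⌈34 * σ ^ 2 / γ ^ 2⌉₊ := by exact_mod_cast hL
  have hceil : 34 * σ ^ 2 ≤ ⌈34 * σ ^ 2 / γ ^ 2⌉₊ * γ ^ 2 :=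
    (div_le_iff₀ (by positivity)).1 (Nat.le_ceil _)
  rw [div_le_iff₀ (by positivity)]
  linarith

theorem stmt19_general {Ω : Type*} [MeasureSpace Ω] [IsProbabilityMeasure (ℙ : Measure Ω)]
    (K L : ℕ) (hK : 0 < K) (hL : 0 < L) (μm σ γ : ℝ) (hγ : 0 < γ)
    (hLdef : L = ⌈34 * σ ^ 2 / γ ^ 2⌉₊)
    (X : Fin K × Fin L → Ω → ℝ)
    (hmeas : ∀ p, Measurable (X p))
    (hindep : iIndepFun X ℙ)
    (hmean : ∀ p, ∫ ω, X p ω ∂ℙ = μm)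
    (hvar : ∀ p, variance (X p) ℙ = σ ^ 2) :
    (ℙ {ω | γ ≤
        |(fun k => (∑ l, X (k, l) ω) / (L : ℝ))
            ((Tuple.sort fun k => (∑ l, X (k, l) ω) / (L : ℝ))
              ⟨K / 2, Nat.div_lt_self hK one_lt_two⟩) - μm|}).toReal
      ≤ 2 * Real.exp (-(K : ℝ) / 2) := by
  classical
  have hσ : 0 < σ ^ 2 := by
    refine (sq_nonneg σ).lt_of_ne fun h ↦ ?_
    simp [hLdef, ← h] at hL
  have : Nonempty (Fin L) := ⟨⟨0, hL⟩⟩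
  set Y : Fin K → Ω → ℝ := fun k ω ↦ (∑ l, X (k, l) ω) / L
  set s : Set ℝ := {x | γ ≤ |x - μm|}
  have hY : iIndepFun Y ℙ := (hindep.curry hmeas).comp (fun _ v ↦ (∑ l, v l) / L) fun _ ↦ by
    fun_prop
  have hmem : ∀ p, MemLp (X p) 2 ℙ := fun p ↦
    memLp_two_of_variance_ne_zero (hmeas p).aestronglyMeasurable (hvar p ▸ hσ.ne')
  have hYs : ∀ k, ℙ (Y k ⁻¹' s) ≤ ENNReal.ofReal (1 / 34) := fun k ↦ by
    have hcheb := measure_abs_sum_div_card_sub_ge_le (fun l ↦ hmem (k, l))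
      (fun l l' hll' ↦ hindep.indepFun (by simpa using hll')) (fun l ↦ hmean _)
      (fun l ↦ hvar _) hγ
    rw [Fintype.card_fin] at hcheb
    exact hcheb.trans <| ENNReal.ofReal_le_ofReal <| hLdef ▸ div_ceil_mul_sq_le hγ (hLdef ▸ hL)
  have hmedian : {ω | γ ≤
        |Y (Tuple.sort (fun k ↦ Y k ω) ⟨K / 2, Nat.div_lt_self hK one_lt_two⟩) ω - μm|}
      ⊆ {ω | K - K / 2 ≤ #{k | Y k ω ∈ s}} := fun ω hω ↦
    (le_min le_rfl (by dsimp only; omega)).trans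
      (Tuple.min_le_card_filter_abs_sub_ge (fun k ↦ Y k ω) _ hω)
  refine ENNReal.toReal_le_of_le_ofReal (by positivity) ?_
  calc _ ≤ _ := measure_mono hmedian
    _ ≤ (Fintype.card (Fin K)).choose (K - K / 2) * ENNReal.ofReal (1 / 34) ^ (K - K / 2) :=
        measure_le_card_filter_mem_le hY (measurableSet_le measurable_const (by fun_prop)) hYs _
    _ ≤ ENNReal.ofReal (Real.exp (-(K : ℝ) / 2)) := by
        rw [Fintype.card_fin, ← ENNReal.ofReal_pow (by norm_num), ← ENNReal.ofReal_natCast,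
          ← ENNReal.ofReal_mul (by positivity)]
        exact ENNReal.ofReal_le_ofReal (Nat.choose_mul_pow_le_exp_neg_half (by omega))
    _ ≤ ENNReal.ofReal (2 * Real.exp (-(K : ℝ) / 2)) :=
        ENNReal.ofReal_le_ofReal (by linarith [Real.exp_pos (-(K : ℝ) / 2)])

/-- Median-of-means concentration: for i.i.d. real random variables with mean `μm` and variance
`σ²`, partitioned into `K` groups of size `L = ⌈34σ²/γ²⌉`, the median of the `K` group means
deviates from `μm` by at least `γ` with probability at most `2e^{−K/2}`. The median of the `K`
group means is the `⌊K/2⌋`-th entry of the sorted tuple of means. -/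
theorem stmt19 {Ω : Type*} [MeasureSpace Ω] [IsProbabilityMeasure (ℙ : Measure Ω)]
    (K L : ℕ) (hK : 0 < K) (hL : 0 < L) (μm σ γ : ℝ) (hγ : 0 < γ)
    (hLdef : L = ⌈34 * σ ^ 2 / γ ^ 2⌉₊)
    (X : Fin K × Fin L → Ω → ℝ)
    (hmeas : ∀ p, Measurable (X p))
    (hindep : iIndepFun X ℙ)
    (hident : ∀ p q, IdentDistrib (X p) (X q) ℙ ℙ)
    (hint : ∀ p, Integrable (X p) ℙ)
    (hmean : ∀ p, ∫ ω, X p ω ∂ℙ = μm)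
    (hvar : ∀ p, variance (X p) ℙ = σ ^ 2) :
    (ℙ {ω | γ ≤
        |(fun k => (∑ l, X (k, l) ω) / (L : ℝ))
            ((Tuple.sort fun k => (∑ l, X (k, l) ω) / (L : ℝ))
              ⟨K / 2, Nat.div_lt_self hK one_lt_two⟩) - μm|}).toReal
      ≤ 2 * Real.exp (-(K : ℝ) / 2) :=
  stmt19_general K L hK hL μm σ γ hγ hLdef X hmeas hindep hmean hvar
end
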